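/- For the tensor obtained by reshaping the d-fold row-wise Kronecker product U^{⊙d} of an m×n matrix U, every unfolding matrix separating the first k Kronecker factors from the rest has rank at most m; hence an exact tensor-train representation with all ranks at most m exists. -/
import Mathlib


/-- for the `(d+1)`-way tensor `T(i,i₁,…,i_d) = ∏_k U(i,i_k)` reshaped
from the `d`-fold row-wise Kronecker product `U^{⊙d}`, every unfolding matrix that
groups `(i,i₁,…,i_k)` against `(i_{k+1},…,i_d)` has rank at most `m`. -/
theorem rowKronPow_unfolding_rank_le (m n d : ℕ) (hd : 2 ≤ d)
    (U : Matrix (Fin m) (Fin n) ℝ)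
    (k l : ℕ) (hk : 1 ≤ k) (hl : 1 ≤ l) (h : d = k + l) :
    (Matrix.of fun (p : Fin m × (Fin k → Fin n)) (b : Fin l → Fin n) =>
      ∏ j : Fin d, U p.1 (Fin.append p.2 b (Fin.cast h j))).rank ≤ m := by
  set A : Matrix (Fin m × (Fin k → Fin n)) (Fin m) ℝ :=
    Matrix.of fun p i => if p.1 = i then ∏ j : Fin k, U p.1 (p.2 j) else 0 with hA
  set B : Matrix (Fin m) (Fin l → Fin n) ℝ :=
    Matrix.of fun i b => ∏ j : Fin l, U i (b j) with hB
  have hfac : (Matrix.of fun (p : Fin m × (Fin k → Fin n)) (b : Fin l → Fin n) =>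
      ∏ j : Fin d, U p.1 (Fin.append p.2 b (Fin.cast h j))) = A * B := by
    ext p b
    have h1 : ∏ j : Fin d, U p.1 (Fin.append p.2 b (Fin.cast h j))
        = ∏ j : Fin (k + l), U p.1 (Fin.append p.2 b j) := by
      exact Fintype.prod_equiv (finCongr h) _ _ (fun j => rfl)
    simp only [Matrix.of_apply, h1, Fin.prod_univ_add, Fin.append_left, Fin.append_right,
      Matrix.mul_apply, hA, hB]
    rw [Finset.sum_eq_single p.1]
    · simp
    · intro i _ hi
      simp [Ne.symm hi]
    · simp
  rw [hfac]
  calc (A * B).rank ≤ B.rank := Matrix.rank_mul_le_right A B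
    _ ≤ m := by simpa using B.rank_le_card_height
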